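/- arXiv:1909.02579 — 3 statements merged into one kernel-verified Lean document; each statement's English description precedes it below -/
import Mathlib

section
/- Let C be a class of matrices. If C contains a matrix having a column with at least two nonzero entries, then C contains a matrix D having a column with two nonzero entries of the same sign, i.e., there exist an index j and distinct indices i ≠ k with D_{i,j}·D_{k,j} > 0. -/
/-- The permutation matrix of a permutation `σ`: its `(i, j)` entry is `1` iff `i = σ j`. -/
def permMat {m : ℕ} (σ : Equiv.Perm (Fin m)) : Matrix (Fin m) (Fin m) ℤ :=
  Matrix.of fun i j => if i = σ j then 1 else 0

/-- `extMat A n` is the block-diagonal matrix `diag(A, I_n)`. -/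
def extMat {k : ℕ} (A : Matrix (Fin k) (Fin k) ℤ) (n : ℕ) :
    Matrix (Fin (k + n)) (Fin (k + n)) ℤ :=
  Matrix.reindex finSumFinEquiv finSumFinEquiv
    (Matrix.fromBlocks A 0 0 (1 : Matrix (Fin n) (Fin n) ℤ))

/-- A *class of matrices*: a set of square integer matrices of arbitrary sizes, closed
under conjugation by permutation matrices, extension by identity blocks, containing all
identity matrices, and closed under products of equal-size matrices. -/
structure MatrixClass where
  carrier : ∀ k : ℕ, Set (Matrix (Fin k) (Fin k) ℤ)
  perm_mem : ∀ {k : ℕ} (A : Matrix (Fin k) (Fin k) ℤ), A ∈ carrier k →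
    ∀ σ : Equiv.Perm (Fin k), permMat σ * A * permMat σ⁻¹ ∈ carrier k
  ext_mem : ∀ {k : ℕ} (A : Matrix (Fin k) (Fin k) ℤ), A ∈ carrier k →
    ∀ n : ℕ, 1 ≤ n → extMat A n ∈ carrier (k + n)
  one_mem : ∀ n : ℕ, 1 ≤ n → (1 : Matrix (Fin n) (Fin n) ℤ) ∈ carrier n
  mul_mem : ∀ {k : ℕ} (A B : Matrix (Fin k) (Fin k) ℤ),
    A ∈ carrier k → B ∈ carrier k → A * B ∈ carrier k

/-!
Suppose no matrix of `C` has a column with two nonzero entries of the same sign. Then the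
given column `j` of `A` has exactly two nonzero entries `a = A i₁ j` and `b = A i₂ j`, and
`a * b < 0`. Let `E = diag(A, 1)` and let `τ` send `i₁` to the new last index and `i₂` to `j`.
Column `τ j` of `τ(E)` is `a • e_last + b • e_j`, so the same column of `E * τ(E) ∈ C` is
`a • e_last + b • (a • e_{i₁} + b • e_{i₂})`. Its entries `a`, `a * b`, `b * b` pairwise have
nonpositive products, which forces `a ≤ 0` and `b ≤ 0`, contradicting `a * b < 0`.
-/

theorem permMat_eq_toPEquiv_toMatrix {m : ℕ} (σ : Equiv.Perm (Fin m)) :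
    permMat σ = σ.symm.toPEquiv.toMatrix := by
  ext i j
  simp [permMat, PEquiv.toMatrix_apply, Equiv.eq_symm_apply, eq_comm]

theorem permMat_mul_mul_permMat_inv {m : ℕ} (σ : Equiv.Perm (Fin m))
    (A : Matrix (Fin m) (Fin m) ℤ) :
    permMat σ * A * permMat σ⁻¹ = A.submatrix ⇑σ⁻¹ ⇑σ⁻¹ := by
  rw [permMat_eq_toPEquiv_toMatrix, permMat_eq_toPEquiv_toMatrix,
    PEquiv.toMatrix_toPEquiv_mul, PEquiv.mul_toMatrix_toPEquiv]
  rfl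

theorem mul_permMat_mul_permMat_inv_apply {m : ℕ} (E : Matrix (Fin m) (Fin m) ℤ)
    (τ : Equiv.Perm (Fin m)) (i c : Fin m) :
    (E * (permMat τ * E * permMat τ⁻¹)) i (τ c) = ∑ p, E i (τ p) * E p c := by
  rw [Matrix.mul_apply, ← Equiv.sum_comp τ]
  simp [permMat_mul_mul_permMat_inv]

section extMat

variable {k n : ℕ} (A : Matrix (Fin k) (Fin k) ℤ)

@[simp]
theorem extMat_castAdd_castAdd (p q : Fin k) :
    extMat A n (Fin.castAdd n p) (Fin.castAdd n q) = A p q := by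
  simp [extMat, ← finSumFinEquiv_apply_left]

@[simp]
theorem extMat_natAdd_castAdd (p : Fin n) (q : Fin k) :
    extMat A n (Fin.natAdd k p) (Fin.castAdd n q) = 0 := by
  simp [extMat, ← finSumFinEquiv_apply_left, ← finSumFinEquiv_apply_right]

@[simp]
theorem extMat_castAdd_natAdd (p : Fin k) (q : Fin n) :
    extMat A n (Fin.castAdd n p) (Fin.natAdd k q) = 0 := by
  simp [extMat, ← finSumFinEquiv_apply_left, ← finSumFinEquiv_apply_right]

@[simp]
theorem extMat_natAdd_natAdd (p q : Fin n) :
    extMat A n (Fin.natAdd k p) (Fin.natAdd k q) = (1 : Matrix (Fin n) (Fin n) ℤ) p q := by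
  simp [extMat, ← finSumFinEquiv_apply_right]

end extMat

theorem Equiv.Perm.exists_apply_eq_and_apply_eq {α : Type*} {a b c d : α} (hab : a ≠ b)
    (hcd : c ≠ d) : ∃ τ : Equiv.Perm α, τ a = c ∧ τ b = d :=
  MulAction.is_two_pretransitive_iff.mp (Equiv.Perm.isMultiplyPretransitive α 2) hab hcd

theorem eq_zero_of_mul_nonpos_of_mul_nonpos {R : Type*} [CommRing R] [LinearOrder R]
    [IsStrictOrderedRing R] {x y z : R} (hxy : x * y < 0) (hxz : x * z ≤ 0) (hyz : y * z ≤ 0) :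
    z = 0 := by
  by_contra hz
  have hneg : x * y * (z * z) < 0 := mul_neg_of_neg_of_pos hxy (mul_self_pos.mpr hz)
  have hnonneg : 0 ≤ x * z * (y * z) := mul_nonneg_of_nonpos_of_nonpos hxz hyz
  linarith [show x * z * (y * z) = x * y * (z * z) by ring]

theorem MatrixClass.exists_mem_col_eq (C : MatrixClass) {k : ℕ}
    {A : Matrix (Fin k) (Fin k) ℤ} (hA : A ∈ C.carrier k) {j i₁ i₂ : Fin k} (hne : i₁ ≠ i₂)
    (hcol : ∀ p, p ≠ i₁ → p ≠ i₂ → A p j = 0) :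
    ∃ D ∈ C.carrier (k + 1), ∃ c, D (Fin.last k) c = A i₁ j ∧
      D i₁.castSucc c = A i₁ j * A i₂ j ∧ D i₂.castSucc c = A i₂ j * A i₂ j := by
  set E := extMat A 1
  have hE : E ∈ C.carrier (k + 1) := C.ext_mem A hA 1 le_rfl
  have hEcol : ∀ x, x ≠ i₁.castSucc → x ≠ i₂.castSucc → E x j.castSucc = 0 := by
    intro x
    induction x using Fin.lastCases with
    | last => intros; exact extMat_natAdd_castAdd A 0 j
    | cast p =>
      intro h₁ h₂
      exact (extMat_castAdd_castAdd A p j).trans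
        (hcol p (fun h => h₁ (h ▸ rfl)) (fun h => h₂ (h ▸ rfl)))
  obtain ⟨τ, hτ₁, hτ₂⟩ := Equiv.Perm.exists_apply_eq_and_apply_eq
    (Fin.castSucc_injective k |>.ne hne) (Fin.castSucc_ne_last j).symm
  refine ⟨E * (permMat τ * E * permMat τ⁻¹), C.mul_mem _ _ hE (C.perm_mem _ hE τ),
    τ j.castSucc, ?_⟩
  have hDcol : ∀ i, (E * (permMat τ * E * permMat τ⁻¹)) i (τ j.castSucc) =
      E i (Fin.last k) * A i₁ j + E i j.castSucc * A i₂ j := by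
    intro i
    rw [mul_permMat_mul_permMat_inv_apply, Fintype.sum_eq_add i₁.castSucc i₂.castSucc
      (Fin.castSucc_injective k |>.ne hne) fun x hx => by rw [hEcol x hx.1 hx.2, mul_zero],
      hτ₁, hτ₂]
    simp [E, Fin.castSucc]
  have hlast : Fin.last k = Fin.natAdd k 0 := rfl
  refine ⟨?_, ?_, ?_⟩ <;> rw [hDcol] <;> simp [E, Fin.castSucc, hlast]

theorem class_col_same_sign (C : MatrixClass)
    (h : ∃ (k : ℕ) (A : Matrix (Fin k) (Fin k) ℤ), A ∈ C.carrier k ∧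
      ∃ (j i₁ i₂ : Fin k), i₁ ≠ i₂ ∧ A i₁ j ≠ 0 ∧ A i₂ j ≠ 0) :
    ∃ (k : ℕ) (D : Matrix (Fin k) (Fin k) ℤ), D ∈ C.carrier k ∧
      ∃ (j i₁ i₂ : Fin k), i₁ ≠ i₂ ∧ 0 < D i₁ j * D i₂ j := by
  obtain ⟨k, A, hA, j, i₁, i₂, hne, h₁, h₂⟩ := h
  by_contra! hC
  have hab : A i₁ j * A i₂ j < 0 := (hC k A hA j i₁ i₂ hne).lt_of_ne (mul_ne_zero h₁ h₂)
  have hcol : ∀ p, p ≠ i₁ → p ≠ i₂ → A p j = 0 := fun p hp₁ hp₂ =>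
    eq_zero_of_mul_nonpos_of_mul_nonpos hab (hC k A hA j i₁ p (Ne.symm hp₁))
      (hC k A hA j i₂ p (Ne.symm hp₂))
  obtain ⟨D, hD, c, hDl, hD₁, hD₂⟩ := C.exists_mem_col_eq hA hne hcol
  have hb : A i₂ j ≤ 0 := by
    have h := hC _ D hD c _ _ (Fin.castSucc_ne_last i₁).symm
    rw [hDl, hD₁, ← mul_assoc] at h
    exact nonpos_of_mul_nonpos_right h (mul_self_pos.mpr h₁)
  have ha : A i₁ j ≤ 0 := by
    have h := hC _ D hD c _ _ (Fin.castSucc_ne_last i₂).symm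
    rw [hDl, hD₂] at h
    exact nonpos_of_mul_nonpos_left h (mul_self_pos.mpr h₂)
  exact hab.not_ge (mul_nonneg_of_nonpos_of_nonpos ha hb)
end

section
/- Fix d ≥ 1 and a matrix C ∈ ℤ^{d×d} satisfying λ_{ℓ+1} ≥ 2·λ_ℓ for every ℓ ∈ ℕ. Then for all binary words x, y ∈ {0,1}^*, it holds that x = y if and only if γ_x = γ_y. -/
/-- The first standard basis vector `e₁` of `ℤ^d` (for `d ≥ 1`). -/
def eVec (d : ℕ) (hd : 0 < d) : Fin d → ℤ := Pi.single ⟨0, hd⟩ 1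

/-- For a binary word `x = x₁…x_n`, `fWord C e x v = (f_{x_n} ∘ ⋯ ∘ f_{x_1}) v`,
where `f_b w = C·w + b·e`. -/
def fWord {d : ℕ} (C : Matrix (Fin d) (Fin d) ℤ) (e : Fin d → ℤ)
    (x : List Bool) (v : Fin d → ℤ) : Fin d → ℤ :=
  x.foldl (fun w b => C.mulVec w + (if b then (1 : ℤ) else 0) • e) v

/-- `lam C hd ℓ = (C^ℓ·e₁)(1)`, the first entry of `C^ℓ·e₁`. -/
def lam {d : ℕ} (C : Matrix (Fin d) (Fin d) ℤ) (hd : 0 < d) (ℓ : ℕ) : ℤ :=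
  ((C ^ ℓ).mulVec (eVec d hd)) ⟨0, hd⟩

/-- `gam C hd x = f_x(e₁)(1)`, the first entry of `f_x(e₁)`. -/
def gam {d : ℕ} (C : Matrix (Fin d) (Fin d) ℤ) (hd : 0 < d) (x : List Bool) : ℤ :=
  fWord C (eVec d hd) x (eVec d hd) ⟨0, hd⟩

section Aux

variable {d : ℕ} (C : Matrix (Fin d) (Fin d) ℤ) (hd : 0 < d)

lemma lam_zero : lam C hd 0 = 1 := by
  simp [lam, eVec, Matrix.one_mulVec]

variable (hC : ∀ ℓ : ℕ, 2 * lam C hd ℓ ≤ lam C hd (ℓ + 1))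

include hC in
lemma lam_pos : ∀ n, 0 < lam C hd n := by
  intro n
  induction n with
  | zero => simp [lam_zero]
  | succ n ih => have := hC n; linarith

include hC in
lemma lam_mono : ∀ {m n : ℕ}, m ≤ n → lam C hd m ≤ lam C hd n := by
  intro m n h
  exact monotone_nat_of_le_succ (fun k => by have := hC k; have := lam_pos C hd hC k; linarith) h

lemma fWord_affine (e : Fin d → ℤ) :
    ∀ (x : List Bool) (v : Fin d → ℤ),
      fWord C e x v = (C ^ x.length).mulVec v + fWord C e x 0 := by
  intro x
  induction x with
  | nil => intro v; simp [fWord, Matrix.one_mulVec]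
  | cons b x ih =>
    intro v
    have hstep : ∀ w, fWord C e (b :: x) w
        = fWord C e x (C.mulVec w + (if b then (1:ℤ) else 0) • e) := fun w => rfl
    rw [hstep, hstep, ih, ih (C.mulVec 0 + (if b then (1:ℤ) else 0) • e)]
    have h0 : C.mulVec (0 : Fin d → ℤ) = 0 := Matrix.mulVec_zero C
    rw [h0, zero_add]
    have : (C ^ x.length).mulVec (C.mulVec v + (if b then (1:ℤ) else 0) • e)
        = (C ^ (x.length + 1)).mulVec v + (C ^ x.length).mulVec ((if b then (1:ℤ) else 0) • e) := by
      rw [Matrix.mulVec_add, Matrix.mulVec_mulVec, ← pow_succ]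
    simp only [List.length_cons, this]
    abel

/-- The "fractional" part of `gam`. -/
def Tval : List Bool → ℤ
  | [] => 0
  | b :: x => (if b then lam C hd x.length else 0) + Tval x

lemma Tval_nonneg (hC : ∀ ℓ : ℕ, 2 * lam C hd ℓ ≤ lam C hd (ℓ + 1)) :
    ∀ x, 0 ≤ Tval C hd x := by
  intro x
  induction x with
  | nil => simp [Tval]
  | cons b x ih =>
    have := lam_pos C hd hC x.length
    unfold Tval
    split <;> linarith

include hC in
lemma Tval_le : ∀ x : List Bool, Tval C hd x ≤ lam C hd x.length - 1 := by
  intro x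
  induction x with
  | nil => simp [Tval, lam_zero]
  | cons b x ih =>
    have h1 := hC x.length
    have h2 := lam_pos C hd hC x.length
    unfold Tval
    simp only [List.length_cons]
    split <;> linarith

lemma fWord_zero_first :
    ∀ x : List Bool, fWord C (eVec d hd) x 0 ⟨0, hd⟩ = Tval C hd x := by
  intro x
  induction x with
  | nil => simp [fWord, Tval]
  | cons b x ih =>
    have hstep : fWord C (eVec d hd) (b :: x) 0
        = fWord C (eVec d hd) x (C.mulVec 0 + (if b then (1:ℤ) else 0) • eVec d hd) := rfl
    rw [hstep, Matrix.mulVec_zero, zero_add,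
      fWord_affine C (eVec d hd) x ((if b then (1:ℤ) else 0) • eVec d hd)]
    have : (C ^ x.length).mulVec ((if b then (1:ℤ) else 0) • eVec d hd)
        = (if b then (1:ℤ) else 0) • (C ^ x.length).mulVec (eVec d hd) := by
      rw [Matrix.mulVec_smul]
    rw [this]
    simp only [Pi.add_apply, Pi.smul_apply, smul_eq_mul, ih]
    cases b <;> simp [Tval, lam]

lemma gam_eq (x : List Bool) :
    gam C hd x = lam C hd x.length + Tval C hd x := by
  unfold gam
  rw [fWord_affine C (eVec d hd) x (eVec d hd)]
  simp only [Pi.add_apply]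
  rw [fWord_zero_first, ← lam]

include hC in
lemma gam_lt_of_length_lt {x y : List Bool} (h : x.length < y.length) :
    gam C hd x < gam C hd y := by
  rw [gam_eq, gam_eq]
  have h1 := Tval_le C hd hC x
  have h2 := hC x.length
  have h3 := lam_mono C hd hC (Nat.succ_le_of_lt h)
  have h4 := Tval_nonneg C hd hC y
  have h5 := lam_pos C hd hC x.length
  linarith

include hC in
lemma Tval_inj : ∀ x y : List Bool, x.length = y.length →
    Tval C hd x = Tval C hd y → x = y := by
  intro x
  induction x with
  | nil => intro y hl _; exact (List.length_eq_zero_iff.mp hl.symm).symm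
  | cons b x ih =>
    intro y hl ht
    match y with
    | [] => simp at hl
    | c :: y =>
      simp only [List.length_cons, Nat.succ_inj] at hl
      unfold Tval at ht
      rw [hl] at ht
      have hle_x := Tval_le C hd hC x
      have hle_y := Tval_le C hd hC y
      have hnn_x := Tval_nonneg C hd hC x
      have hnn_y := Tval_nonneg C hd hC y
      rw [hl] at hle_x
      have hbc : b = c := by
        by_contra hbc
        cases b <;> cases c <;> simp_all <;> linarith
      subst hbc
      have : Tval C hd x = Tval C hd y := by
        cases b <;> simp at ht <;> linarith
      rw [ih y hl this]

end Aux

theorem gam_injective_iff {d : ℕ} (hd : 0 < d) (C : Matrix (Fin d) (Fin d) ℤ)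
    (hC : ∀ ℓ : ℕ, 2 * lam C hd ℓ ≤ lam C hd (ℓ + 1)) (x y : List Bool) :
    x = y ↔ gam C hd x = gam C hd y := by
  constructor
  · intro h; rw [h]
  · intro h
    have hlen : x.length = y.length := by
      rcases lt_trichotomy x.length y.length with hl | hl | hl
      · exact absurd h (ne_of_lt (gam_lt_of_length_lt C hd hC hl))
      · exact hl
      · exact absurd h.symm (ne_of_lt (gam_lt_of_length_lt C hd hC hl))
    rw [gam_eq, gam_eq, hlen] at h
    exact Tval_inj C hd hC x y hlen (by linarith)
end

section
/- Let d ≥ 1, n ≥ 3, and let A ∈ ℤ^{d×d} be a copy matrix with A_{a,b} = 1 for some a ≠ b in {1,…,d}. Let A' = diag(A, I_n) ∈ ℤ^{(d+n)×(d+n)}, and for distinct s, t ∈ {d+1,…,d+n} let B_{s,t} = P_π·A'·P_{π⁻¹} where π is the permutation (b s)(a t). Then: (1) for every v ∈ ℤ^{d+n}, (B_{s,t}·v)(t) = v(s) and (B_{s,t}·v)(u) = v(u) for every u ∈ {d+1,…,d+n} \ {s,t}; and (2) for distinct x, y, z ∈ {d+1,…,d+n}, setting F_{x,y} = B_{z,x}·B_{x,y}·B_{y,z},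 for every v ∈ ℤ^{d+n}: (F_{x,y}·v)(x) = v(y), (F_{x,y}·v)(y) = v(x), and (F_{x,y}·v)(u) = v(u) for every u ∈ {d+1,…,d+n} \ {x,y,z}. -/
/-- Conjugation of a matrix by a permutation: `σ(M) = P_σ · M · P_{σ⁻¹}`. -/
def conjMat {m : ℕ} (σ : Equiv.Perm (Fin m)) (M : Matrix (Fin m) (Fin m) ℤ) :
    Matrix (Fin m) (Fin m) ℤ :=
  permMat σ * M * permMat σ⁻¹

/-- A square integer matrix is a *copy* matrix if all its entries lie in `{0, 1}`
and each of its rows contains at most one nonzero entry. -/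
def IsCopy {k : ℕ} (A : Matrix (Fin k) (Fin k) ℤ) : Prop :=
  (∀ i j, A i j = 0 ∨ A i j = 1) ∧
  ∀ i j₁ j₂, A i j₁ ≠ 0 → A i j₂ ≠ 0 → j₁ = j₂

/-- `Bmat A a b s t = P_π · diag(A, I_n) · P_{π⁻¹}` where `π = (b s)(a t)`. -/
def Bmat {d n : ℕ} (A : Matrix (Fin d) (Fin d) ℤ) (a b : Fin d)
    (s t : Fin (d + n)) : Matrix (Fin (d + n)) (Fin (d + n)) ℤ :=
  conjMat (Equiv.swap (Fin.castAdd n b) s * Equiv.swap (Fin.castAdd n a) t) (extMat A n)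

/-!
Conjugating `diag(A, I_n)` by `π = (b s)(a t)` moves the row of `A` that copies coordinate `b`
into coordinate `a` to a row that copies coordinate `s` into coordinate `t`, and leaves the
identity rows at the other coordinates `≥ d`. So `B_{s,t}` acts on these coordinates as the
assignment `t := s`, and `F_{x,y}` performs `z := y; y := x; x := z`, i.e. it swaps `x` and `y`.
-/

open Matrix

section PermutationMatrices

variable {m : ℕ}

lemma permMat_eq_toMatrix (σ : Equiv.Perm (Fin m)) :
    permMat σ = (σ⁻¹ : Equiv.Perm (Fin m)).toPEquiv.toMatrix := by
  ext i j
  simp [permMat, Equiv.symm_apply_eq]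

lemma conjMat_eq_submatrix (σ : Equiv.Perm (Fin m)) (M : Matrix (Fin m) (Fin m) ℤ) :
    conjMat σ M = M.submatrix ⇑σ⁻¹ ⇑σ⁻¹ := by
  rw [conjMat, permMat_eq_toMatrix, permMat_eq_toMatrix, PEquiv.toMatrix_toPEquiv_mul,
    PEquiv.mul_toMatrix_toPEquiv, submatrix_submatrix]
  rfl

lemma conjMat_mulVec (σ : Equiv.Perm (Fin m)) (M : Matrix (Fin m) (Fin m) ℤ)
    (v : Fin m → ℤ) :
    conjMat σ M *ᵥ v = (M *ᵥ (v ∘ σ)) ∘ ⇑σ⁻¹ := by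
  rw [conjMat_eq_submatrix, submatrix_mulVec_equiv]
  rfl

end PermutationMatrices

section BlockDiagonal

variable {k n : ℕ} (A : Matrix (Fin k) (Fin k) ℤ) (w : Fin (k + n) → ℤ)

lemma extMat_mulVec_castAdd (i : Fin k) :
    (extMat A n *ᵥ w) (Fin.castAdd n i) = (A *ᵥ (w ∘ Fin.castAdd n)) i := by
  rw [extMat, reindex_apply, submatrix_mulVec_equiv, Function.comp_apply,
    finSumFinEquiv_symm_apply_castAdd, fromBlocks_mulVec]
  simp only [Sum.elim_inl, zero_mulVec, add_zero]
  rfl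

lemma extMat_mulVec_of_le {i : Fin (k + n)} (hi : k ≤ i.val) :
    (extMat A n *ᵥ w) i = w i := by
  obtain ⟨j, rfl⟩ : ∃ j : Fin n, i = Fin.natAdd k j :=
    ⟨⟨i.val - k, by omega⟩, by ext; simp; omega⟩
  simp [extMat, submatrix_mulVec_equiv, fromBlocks_mulVec]

end BlockDiagonal

lemma IsCopy.mulVec_apply_of_eq_one {k : ℕ} {A : Matrix (Fin k) (Fin k) ℤ} (hA : IsCopy A)
    {i j : Fin k} (hij : A i j = 1) (w : Fin k → ℤ) :
    (A *ᵥ w) i = w j := by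
  have hrow : ∀ l, l ≠ j → A i l = 0 := fun l hl =>
    (hA.1 i l).resolve_right fun h => hl (hA.2 i l j (by simp [h]) (by simp [hij]))
  rw [mulVec, dotProduct, Finset.sum_eq_single j (fun l _ hl => by simp [hrow l hl])
    (by simp), hij, one_mul]

lemma Fin.castAdd_ne_of_le {k n : ℕ} (c : Fin k) {u : Fin (k + n)} (hu : k ≤ u.val) :
    Fin.castAdd n c ≠ u :=
  Fin.ne_of_lt (Fin.lt_def.mpr ((Fin.castAdd_lt n c).trans_le hu))

section Bmat

variable {d n : ℕ} {A : Matrix (Fin d) (Fin d) ℤ} {a b : Fin d} {s t : Fin (d + n)}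

lemma Bmat_mulVec_apply_right (hA : IsCopy A) (hab : a ≠ b) (hAab : A a b = 1)
    (ht : d ≤ t.val) (hst : s ≠ t) (v : Fin (d + n) → ℤ) :
    (Bmat A a b s t *ᵥ v) t = v s := by
  have hbt := Fin.castAdd_ne_of_le b ht
  have hba : Fin.castAdd n b ≠ Fin.castAdd n a := fun h => hab (Fin.castAdd_injective d n h).symm
  rw [Bmat, conjMat_mulVec, Function.comp_apply, _root_.mul_inv_rev, Equiv.swap_inv,
    Equiv.swap_inv, Equiv.Perm.mul_apply, Equiv.swap_apply_of_ne_of_ne hbt.symm hst.symm,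
    Equiv.swap_apply_right, extMat_mulVec_castAdd, hA.mulVec_apply_of_eq_one hAab]
  simp [Equiv.swap_apply_of_ne_of_ne hba hbt]

lemma Bmat_mulVec_apply_of_ne {u : Fin (d + n)} (hu : d ≤ u.val) (hus : u ≠ s) (hut : u ≠ t)
    (v : Fin (d + n) → ℤ) :
    (Bmat A a b s t *ᵥ v) u = v u := by
  have hau := Fin.castAdd_ne_of_le a hu
  have hbu := Fin.castAdd_ne_of_le b hu
  have hσu : (Equiv.swap (Fin.castAdd n b) s * Equiv.swap (Fin.castAdd n a) t) u = u := by
    rw [Equiv.Perm.mul_apply, Equiv.swap_apply_of_ne_of_ne hau.symm hut,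
      Equiv.swap_apply_of_ne_of_ne hbu.symm hus]
  rw [Bmat, conjMat_mulVec, Function.comp_apply, Equiv.Perm.inv_eq_iff_eq.mpr hσu.symm,
    extMat_mulVec_of_le A _ hu, Function.comp_apply, hσu]

end Bmat

theorem copy_swap_general {d n : ℕ}
    (A : Matrix (Fin d) (Fin d) ℤ) (hA : IsCopy A)
    (a b : Fin d) (hab : a ≠ b) (hAab : A a b = 1) :
    (∀ s t : Fin (d + n), d ≤ s.val → d ≤ t.val → s ≠ t →
      ∀ v : Fin (d + n) → ℤ,
        ((Bmat A a b s t).mulVec v) t = v s ∧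
        ∀ u : Fin (d + n), d ≤ u.val → u ≠ s → u ≠ t →
          ((Bmat A a b s t).mulVec v) u = v u) ∧
    (∀ x y z : Fin (d + n), d ≤ x.val → d ≤ y.val → d ≤ z.val →
      x ≠ y → x ≠ z → y ≠ z →
      ∀ v : Fin (d + n) → ℤ,
        ((Bmat A a b z x * Bmat A a b x y * Bmat A a b y z).mulVec v) x = v y ∧
        ((Bmat A a b z x * Bmat A a b x y * Bmat A a b y z).mulVec v) y = v x ∧
        ∀ u : Fin (d + n), d ≤ u.val → u ≠ x → u ≠ y → u ≠ z →
          ((Bmat A a b z x * Bmat A a b x y * Bmat A a b y z).mulVec v) u = v u) := by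
  have hB {s t : Fin (d + n)} := Bmat_mulVec_apply_right (s := s) (t := t) hA hab hAab
  refine ⟨fun s t _ ht hst v => ⟨hB ht hst v, fun u hu hus hut =>
    Bmat_mulVec_apply_of_ne hu hus hut v⟩, fun x y z hx hy hz hxy hxz hyz v => ?_⟩
  simp only [← mulVec_mulVec]
  refine ⟨?_, ?_, fun u hu hux huy huz => ?_⟩
  · rw [hB hx hxz.symm, Bmat_mulVec_apply_of_ne hz hxz.symm hyz.symm, hB hz hyz]
  · rw [Bmat_mulVec_apply_of_ne hy hyz hxy.symm, hB hy hxy, Bmat_mulVec_apply_of_ne hx hxy hxz]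
  · rw [Bmat_mulVec_apply_of_ne hu huz hux, Bmat_mulVec_apply_of_ne hu hux huy,
      Bmat_mulVec_apply_of_ne hu huy huz]

theorem copy_swap {d n : ℕ} (hd : 0 < d) (hn : 3 ≤ n)
    (A : Matrix (Fin d) (Fin d) ℤ) (hA : IsCopy A)
    (a b : Fin d) (hab : a ≠ b) (hAab : A a b = 1) :
    (∀ s t : Fin (d + n), d ≤ s.val → d ≤ t.val → s ≠ t →
      ∀ v : Fin (d + n) → ℤ,
        ((Bmat A a b s t).mulVec v) t = v s ∧
        ∀ u : Fin (d + n), d ≤ u.val → u ≠ s → u ≠ t →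
          ((Bmat A a b s t).mulVec v) u = v u) ∧
    (∀ x y z : Fin (d + n), d ≤ x.val → d ≤ y.val → d ≤ z.val →
      x ≠ y → x ≠ z → y ≠ z →
      ∀ v : Fin (d + n) → ℤ,
        ((Bmat A a b z x * Bmat A a b x y * Bmat A a b y z).mulVec v) x = v y ∧
        ((Bmat A a b z x * Bmat A a b x y * Bmat A a b y z).mulVec v) y = v x ∧
        ∀ u : Fin (d + n), d ≤ u.val → u ≠ x → u ≠ y → u ≠ z →
          ((Bmat A a b z x * Bmat A a b x y * Bmat A a b y z).mulVec v) u = v u) :=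
  copy_swap_general A hA a b hab hAab
end
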